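/- arXiv:2210.01366 — 2 statements merged into one kernel-verified Lean document; each statement's English description precedes it below -/
import Mathlib

section
/- Assume ⟨uₙ, v'ₙ⟩ < 0, and for i ∈ {1, …, n−1} let a_i be the unique integer with u_i − u'_i = a_i · uₙ. Then a_i = −⟨u_i, v'ₙ⟩ for every i ∈ {1, …, n−1}, and the 'wall relation' a₁v₁ + ⋯ + a_{n−1}v_{n−1} + vₙ + v'ₙ = 0 holds in N. -/
/-!
The bases `v` and `v'` differ only in their last vector, so the `vₙ`-coordinate of `v'ₙ` is a
unit of `ℤ`, hence `⟨uₙ, v'ₙ⟩ = -1` by the sign assumption. Evaluating `u_i - u'_i = a_i • uₙ`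
at `v'ₙ` then gives `a_i = -⟨u_i, v'ₙ⟩`, and the wall relation is just the expansion of `v'ₙ`
in the basis `v`, whose coordinates are `⟨u_i, v'ₙ⟩`.
-/

namespace Module.Basis

section CommRing

variable {ι R M : Type*} [CommRing R] [AddCommGroup M] [Module R M]

theorem eq_coord_of_apply_eq_ite [DecidableEq ι] (v : Basis ι R M) {i : ι} {f : Dual R M}
    (h : ∀ j, f (v j) = if i = j then 1 else 0) : f = v.coord i :=
  v.ext fun j => by simp [h, Finsupp.single_apply, eq_comm]

theorem repr_apply_eq_mul_of_coord_sub_coord_eq_smul {v v' : Basis ι R M} {i m : ι} (hi : i ≠ m)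
    {a : R} (ha : v.coord i - v'.coord i = a • v.coord m) :
    v.repr (v' m) i = a * v.repr (v' m) m := by
  simpa [Finsupp.single_apply, hi] using LinearMap.congr_fun ha (v' m)

variable {v v' : Basis ι R M} {m : ι}

theorem repr_apply_self_mul_repr_apply_self (hvv' : ∀ i ≠ m, v' i = v i) :
    v'.repr (v m) m * v.repr (v' m) m = 1 := by
  have h := congrArg (v.coord m) (v'.linearCombination_repr (v m))
  rw [Finsupp.linearCombination_apply, map_finsuppSum, Finsupp.sum_eq_single m] at h
  · simpa using h
  · intro j _ hj
    simp [hvv' j hj, Ne.symm hj]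
  · simp

theorem sum_erase_smul_add_add_eq_zero [Fintype ι] [DecidableEq ι] {x : M} {c : ι → R}
    (hx : ∀ j ≠ m, v.repr x j = -c j) (hxm : v.repr x m = -1) :
    ∑ j ∈ Finset.univ.erase m, c j • v j + v m + x = 0 := by
  refine v.ext_elem fun j => ?_
  by_cases hj : j = m
  · subst hj
    simp [hxm, Finsupp.single_apply]
  · simp [hx j hj, Finsupp.single_apply, hj]

end CommRing

theorem repr_apply_self_eq_neg_one {ι M : Type*} [AddCommGroup M] [Module ℤ M]
    {v v' : Basis ι ℤ M} {m : ι} (hvv' : ∀ i ≠ m, v' i = v i) (hneg : v.repr (v' m) m < 0) :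
    v.repr (v' m) m = -1 := by
  have := Int.eq_one_or_neg_one_of_mul_eq_one
    ((mul_comm _ _).trans (repr_apply_self_mul_repr_apply_self hvv'))
  omega

end Module.Basis

/-- Assume `⟨uₙ, v'ₙ⟩ < 0`, and for `i ∈ {1, …, n−1}` let `a_i` be the unique
integer with `u_i − u'_i = a_i • uₙ`. Then `a_i = −⟨u_i, v'ₙ⟩` for every
`i ∈ {1, …, n−1}`, and the wall relation
`a₁v₁ + ⋯ + a_{n−1}v_{n−1} + vₙ + v'ₙ = 0` holds in `N`. -/
theorem stmt_4 (n : ℕ) (hn : 1 ≤ n)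
    (N : Type*) [AddCommGroup N] [Module ℤ N]
    (v v' : Module.Basis (Fin n) ℤ N)
    (hvv' : ∀ i : Fin n, (i : ℕ) < n - 1 → v' i = v i)
    (u u' : Fin n → Module.Dual ℤ N)
    (hu : ∀ i j : Fin n, u i (v j) = if i = j then 1 else 0)
    (hu' : ∀ i j : Fin n, u' i (v' j) = if i = j then 1 else 0)
    (hneg : u ⟨n - 1, by omega⟩ (v' ⟨n - 1, by omega⟩) < 0)
    (a : Fin n → ℤ)
    (ha : ∀ i : Fin n, (i : ℕ) < n - 1 →
      u i - u' i = a i • u ⟨n - 1, by omega⟩) :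
    (∀ i : Fin n, (i : ℕ) < n - 1 → a i = - u i (v' ⟨n - 1, by omega⟩)) ∧
      (∑ i ∈ Finset.univ.filter (fun i : Fin n => (i : ℕ) < n - 1), a i • v i)
        + v ⟨n - 1, by omega⟩ + v' ⟨n - 1, by omega⟩ = 0 := by
  -- `a i • v i` in the statement is the `zsmul` of `AddCommGroup`, not the given `Module ℤ N`.
  obtain rfl : ‹Module ℤ N› = AddCommGroup.toIntModule N := Subsingleton.elim _ _
  set m : Fin n := ⟨n - 1, by omega⟩
  have hlt : ∀ i : Fin n, (i : ℕ) < n - 1 ↔ i ≠ m := fun i => by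
    simp only [ne_eq, Fin.ext_iff, m]; omega
  obtain rfl : u = fun i => v.coord i := funext fun i => v.eq_coord_of_apply_eq_ite (hu i)
  obtain rfl : u' = fun i => v'.coord i := funext fun i => v'.eq_coord_of_apply_eq_ite (hu' i)
  simp only [hlt, Module.Basis.coord_apply] at hvv' hneg ha ⊢
  have hm : v.repr (v' m) m = -1 := Module.Basis.repr_apply_self_eq_neg_one hvv' hneg
  have ha' : ∀ i ≠ m, a i = -v.repr (v' m) i := fun i hi => by
    rw [Module.Basis.repr_apply_eq_mul_of_coord_sub_coord_eq_smul hi (ha i hi), hm]; ring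
  refine ⟨ha', ?_⟩
  rw [Finset.filter_ne']
  exact Module.Basis.sum_erase_smul_add_add_eq_zero (c := a)
    (fun j hj => by rw [ha' j hj, neg_neg]) hm
end

section
/- Let A, B, C, D ∈ E with A ≠ B, with C not lying in the affine span of {A, B}, and suppose D = C + t • (B − A) for some real number t > 0 (so that the quadrilateral with vertices A, B, D, C is a trapezoid with side CD parallel to side AB). Then: ∠ C A B + ∠ D B A < π if and only if t < 1; ∠ C A B + ∠ D B A = π if and only if t = 1; and ∠ C A B + ∠ D B A > π if and only if t > 1. -/
open EuclideanGeometry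
open scoped RealInnerProductSpace

/-!
Decompose `C - A = h + P • (B - A)` with `h ⟂ B - A`, `h ≠ 0`. The angle between `h + x • u` and
`u` is `π / 2 - arctan (x‖u‖/‖h‖)`, so `∠ C A B + ∠ D B A` equals
`π + arctan ((P + t - 1)‖u‖/‖h‖) - arctan (P‖u‖/‖h‖)` with `u = B - A`, and the trichotomy is the
strict monotonicity of `arctan`.
-/

namespace InnerProductGeometry

variable {V : Type*} [NormedAddCommGroup V] [InnerProductSpace ℝ V]

theorem angle_add_smul_of_inner_eq_zero {h u : V} (hh : h ≠ 0) (hu : u ≠ 0)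
    (hhu : ⟪h, u⟫ = 0) (x : ℝ) :
    angle (h + x • u) u = Real.pi / 2 - Real.arctan (x * ‖u‖ / ‖h‖) := by
  set y := x * ‖u‖ / ‖h‖ with hy
  have hnorm : ‖h + x • u‖ = ‖h‖ * √(1 + y ^ 2) := by
    have hpyth := norm_add_sq_eq_norm_sq_add_norm_sq_real (x := h) (y := x • u)
      (by rw [inner_smul_right, hhu, mul_zero])
    refine (sq_eq_sq₀ (norm_nonneg _) (by positivity)).1 ?_
    rw [mul_pow, Real.sq_sqrt (by positivity), sq, hpyth, norm_smul, hy]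
    field_simp
    rw [Real.norm_eq_abs, sq_abs]
    ring
  have hcos : Real.cos (angle (h + x • u) u) = Real.cos (Real.pi / 2 - Real.arctan y) := by
    rw [Real.cos_pi_div_two_sub, Real.sin_arctan, cos_angle, hnorm, inner_add_left, hhu,
      real_inner_smul_left, real_inner_self_eq_norm_sq, hy]
    field_simp
    ring
  refine Real.injOn_cos ⟨angle_nonneg _ _, angle_le_pi _ _⟩ ⟨?_, ?_⟩ hcos
  · linarith [Real.arctan_lt_pi_div_two y]
  · linarith [Real.neg_pi_div_two_lt_arctan y]

theorem exists_eq_add_smul_of_notMem_span_singleton {u v : V} (hv : v ∉ ℝ ∙ u) :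
    ∃ (h : V) (P : ℝ), v = h + P • u ∧ ⟪h, u⟫ = 0 ∧ h ≠ 0 := by
  refine ⟨v - (⟪v, u⟫ / ‖u‖ ^ 2) • u, ⟪v, u⟫ / ‖u‖ ^ 2, by abel, ?_, ?_⟩
  · rcases eq_or_ne u 0 with rfl | hu
    · simp
    rw [inner_sub_left, real_inner_smul_left, real_inner_self_eq_norm_sq,
      div_mul_cancel₀ _ (by positivity), sub_self]
  · intro h0
    rw [sub_eq_zero] at h0
    exact hv (h0 ▸ Submodule.smul_mem _ _ (Submodule.mem_span_singleton_self u))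

end InnerProductGeometry

open InnerProductGeometry in
theorem EuclideanGeometry.exists_strictMono_angle_add_angle_eq {E : Type*}
    [NormedAddCommGroup E] [InnerProductSpace ℝ E] {A B C D : E} (hAB : A ≠ B)
    (hC : C ∉ affineSpan ℝ ({A, B} : Set E)) {t : ℝ} (hD : D = C + t • (B - A)) :
    ∃ f : ℝ → ℝ, StrictMono f ∧ ∠ C A B + ∠ D B A = Real.pi + (f t - f 1) := by
  have hCA : C - A ∉ ℝ ∙ (B - A) := by
    rwa [← vsub_eq_sub, ← vsub_eq_sub, ← vectorSpan_pair_rev, ← direction_affineSpan,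
      AffineSubspace.vsub_right_mem_direction_iff_mem (left_mem_affineSpan_pair ℝ A B)]
  set u := B - A
  have hu : u ≠ 0 := sub_ne_zero.2 hAB.symm
  obtain ⟨h, P, hCA_eq, hhu, hh⟩ := exists_eq_add_smul_of_notMem_span_singleton hCA
  have hCAB : ∠ C A B = Real.pi / 2 - Real.arctan (P * ‖u‖ / ‖h‖) := by
    rw [EuclideanGeometry.angle, vsub_eq_sub, vsub_eq_sub, hCA_eq,
      angle_add_smul_of_inner_eq_zero hh hu hhu]
  have hDBA : ∠ D B A = Real.pi / 2 + Real.arctan ((P + t - 1) * ‖u‖ / ‖h‖) := by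
    have hDB : D -ᵥ B = h + (P + t - 1) • u := by
      rw [vsub_eq_sub, hD, sub_eq_iff_eq_add.1 hCA_eq]
      simp only [u]
      module
    have hAB' : A -ᵥ B = -u := by rw [vsub_eq_sub, neg_sub]
    rw [EuclideanGeometry.angle, hDB, hAB', angle_neg_right,
      angle_add_smul_of_inner_eq_zero hh hu hhu]
    ring
  refine ⟨fun s ↦ Real.arctan ((P + s - 1) * ‖u‖ / ‖h‖), ?_, ?_⟩
  · refine Real.arctan_strictMono.comp fun x y hxy ↦ ?_
    gcongr
  · simp only [hCAB, hDBA, add_sub_cancel_right]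
    ring

theorem stmt_5_general (E : Type*) [NormedAddCommGroup E] [InnerProductSpace ℝ E]
    (A B C D : E) (hAB : A ≠ B)
    (hC : C ∉ affineSpan ℝ ({A, B} : Set E))
    (t : ℝ) (hD : D = C + t • (B - A)) :
    (∠ C A B + ∠ D B A < Real.pi ↔ t < 1) ∧
      (∠ C A B + ∠ D B A = Real.pi ↔ t = 1) ∧
      (Real.pi < ∠ C A B + ∠ D B A ↔ 1 < t) := by
  obtain ⟨f, hf, hsum⟩ := exists_strictMono_angle_add_angle_eq hAB hC hD
  rw [hsum, add_lt_iff_neg_left, add_eq_left, lt_add_iff_pos_right, sub_neg, sub_eq_zero,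
    sub_pos, hf.lt_iff_lt, hf.lt_iff_lt, hf.injective.eq_iff]
  exact ⟨Iff.rfl, Iff.rfl, Iff.rfl⟩

/-- Let `A, B, C, D ∈ E` with `A ≠ B`, with `C` not lying in the affine span of
`{A, B}`, and suppose `D = C + t • (B − A)` for some real `t > 0` (so that the
quadrilateral `A, B, D, C` is a trapezoid with side `CD` parallel to side `AB`).
Then `∠ C A B + ∠ D B A` is less than, equal to, or greater than `π` exactly
according to whether `t` is less than, equal to, or greater than `1`. -/
theorem stmt_5 (E : Type*) [NormedAddCommGroup E] [InnerProductSpace ℝ E]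
    (A B C D : E) (hAB : A ≠ B)
    (hC : C ∉ affineSpan ℝ ({A, B} : Set E))
    (t : ℝ) (ht : 0 < t) (hD : D = C + t • (B - A)) :
    (∠ C A B + ∠ D B A < Real.pi ↔ t < 1) ∧
      (∠ C A B + ∠ D B A = Real.pi ↔ t = 1) ∧
      (Real.pi < ∠ C A B + ∠ D B A ↔ 1 < t) :=
  stmt_5_general E A B C D hAB hC t hD
end
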